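/- Let X be a measurable space, let κ₁ and κ₂ be Markov kernels from X to X, let μ be a probability measure on X, let R : X → ℝ be measurable with |R(x)| ≤ R_max for all x (R_max ≥ 0), and let δ ≥ 0 be such that for every probability measure ν on X, ‖νκ₁ − νκ₂‖_TV ≤ δ. For H ∈ ℕ define J_i := Σ_{t=0}^{H−1} ∫ R d(μκ_i^t) for i = 1, 2. Then |J₁ − J₂| ≤ R_max · (H(H−1)/2) · δ. -/

import Mathlib

open MeasureTheory ProbabilityTheory

/-- Pushing a finite measure through a Markov kernel yields a finite measure. -/
instance bindIsFiniteMeasure {X : Type*} [MeasurableSpace X] (μ : Measure X)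
    [IsFiniteMeasure μ] (κ : Kernel X X) [IsMarkovKernel κ] :
    IsFiniteMeasure (μ.bind κ) := by
  constructor
  rw [Measure.bind_apply MeasurableSet.univ (Kernel.measurable κ).aemeasurable]
  calc ∫⁻ x, (κ x) Set.univ ∂μ = ∫⁻ _, 1 ∂μ := by simp
    _ = μ Set.univ := by simp
    _ < ⊤ := measure_lt_top μ _

/-- The `t`-fold iterated bind `μ κ^t` of a measure `μ` along a kernel `κ`:
`μκ^0 = μ` and `μκ^(t+1) = (μκ^t)κ`. -/
noncomputable def iterBind {X : Type*} [MeasurableSpace X] (μ : Measure X)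
    (κ : Kernel X X) : ℕ → Measure X
  | 0 => μ
  | t + 1 => (iterBind μ κ t).bind κ

instance iterBindIsFiniteMeasure {X : Type*} [MeasurableSpace X] (μ : Measure X)
    [IsFiniteMeasure μ] (κ : Kernel X X) [IsMarkovKernel κ] (t : ℕ) :
    IsFiniteMeasure (iterBind μ κ t) := by
  induction t with
  | zero => exact inferInstanceAs (IsFiniteMeasure μ)
  | succ t ih => exact @bindIsFiniteMeasure X _ (iterBind μ κ t) ih κ _

/-- The total variation norm `‖μ − ν‖_TV` of the difference of two finite measures:
the total mass of the total variation of the signed measure `μ − ν`. -/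
noncomputable def tvDist {X : Type*} [MeasurableSpace X] (μ ν : Measure X)
    [IsFiniteMeasure μ] [IsFiniteMeasure ν] : ℝ :=
  ((μ.toSignedMeasure - ν.toSignedMeasure).totalVariation Set.univ).toReal

/-!
Write `μ - ν = p - n` by the Jordan decomposition, so that `tvDist μ ν = p(X) + n(X)`; every
other decomposition `μ - ν = a - b` has `a(X) + b(X) ≥ tvDist μ ν`. Hence total variation obeys
the triangle inequality, does not increase under a Markov kernel (which preserves mass), and
controls `|∫ R dμ - ∫ R dν| ≤ Rmax · tvDist μ ν`. Comparing `μκ₁^(t+1)` with `μκ₂^(t+1)` through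
`(μκ₁^t)κ₂` adds the one-step error `δ` to the error `tvDist (μκ₁^t) (μκ₂^t)` carried along by
`κ₂`, so the `t`-th terms of the two returns differ by at most `Rmax · t δ`, and
`∑_{t<H} t = H(H-1)/2`.
-/

section

variable {X : Type*} [MeasurableSpace X]

lemma exists_add_eq_add_tvDist_eq (μ ν : Measure X) [IsFiniteMeasure μ] [IsFiniteMeasure ν] :
    ∃ (p n : Measure X) (_ : IsFiniteMeasure p) (_ : IsFiniteMeasure n),
      μ + n = ν + p ∧ tvDist μ ν = p.real .univ + n.real .univ := by
  set j := (μ.toSignedMeasure - ν.toSignedMeasure).toJordanDecomposition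
  refine ⟨j.posPart, j.negPart, inferInstance, inferInstance, ?_, ?_⟩
  · have hj : μ.toSignedMeasure - ν.toSignedMeasure =
        j.posPart.toSignedMeasure - j.negPart.toSignedMeasure :=
      (SignedMeasure.toSignedMeasure_toJordanDecomposition _).symm
    rw [sub_eq_sub_iff_add_eq_add, ← Measure.toSignedMeasure_add, ← Measure.toSignedMeasure_add,
      Measure.toSignedMeasure_eq_toSignedMeasure_iff] at hj
    exact hj.trans (add_comm _ _)
  · rw [tvDist, SignedMeasure.totalVariation, ← measureReal_def, measureReal_add_apply]

lemma tvDist_le_of_add_eq_add {μ ν a b : Measure X} [IsFiniteMeasure μ] [IsFiniteMeasure ν]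
    [IsFiniteMeasure a] [IsFiniteMeasure b] (h : μ + b = ν + a) :
    tvDist μ ν ≤ a.real .univ + b.real .univ := by
  have hsub : μ.toSignedMeasure - ν.toSignedMeasure = a.toSignedMeasure - b.toSignedMeasure := by
    rw [sub_eq_sub_iff_add_eq_add, ← Measure.toSignedMeasure_add, ← Measure.toSignedMeasure_add]
    exact Measure.toSignedMeasure_congr (h.trans (add_comm _ _))
  have hle : (a.toSignedMeasure - b.toSignedMeasure).variation ≤ a + b := by
    simpa using VectorMeasure.variation_sub_le (μ := a.toSignedMeasure) (ν := b.toSignedMeasure)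
  rw [tvDist, hsub, SignedMeasure.totalVariation_eq_variation, ← measureReal_add_apply]
  exact ENNReal.toReal_mono (by finiteness) (hle _)

lemma tvDist_self (μ : Measure X) [IsFiniteMeasure μ] : tvDist μ μ = 0 := by
  simp [tvDist, SignedMeasure.totalVariation_zero]

lemma tvDist_triangle (μ ν ξ : Measure X) [IsFiniteMeasure μ] [IsFiniteMeasure ν]
    [IsFiniteMeasure ξ] : tvDist μ ξ ≤ tvDist μ ν + tvDist ν ξ := by
  obtain ⟨p₁, n₁, _, _, h₁, hd₁⟩ := exists_add_eq_add_tvDist_eq μ ν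
  obtain ⟨p₂, n₂, _, _, h₂, hd₂⟩ := exists_add_eq_add_tvDist_eq ν ξ
  have h : μ + (n₁ + n₂) = ξ + (p₂ + p₁) := by
    rw [← add_assoc, h₁, add_right_comm, h₂, add_assoc]
  have hle := tvDist_le_of_add_eq_add h
  rw [measureReal_add_apply, measureReal_add_apply] at hle
  linarith

lemma tvDist_bind_le (μ ν : Measure X) [IsFiniteMeasure μ] [IsFiniteMeasure ν]
    (κ : Kernel X X) [IsMarkovKernel κ] : tvDist (μ.bind κ) (ν.bind κ) ≤ tvDist μ ν := by
  obtain ⟨p, n, _, _, h, hd⟩ := exists_add_eq_add_tvDist_eq μ ν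
  have hκ : μ.bind κ + n.bind κ = ν.bind κ + p.bind κ := by
    rw [← Measure.comp_add, ← Measure.comp_add, h]
  simpa [hd, measureReal_def] using tvDist_le_of_add_eq_add hκ

lemma abs_integral_sub_integral_le_mul_tvDist (μ ν : Measure X) [IsFiniteMeasure μ]
    [IsFiniteMeasure ν] {f : X → ℝ} (hf : Measurable f) {C : ℝ} (hC : ∀ x, |f x| ≤ C) :
    |∫ x, f x ∂μ - ∫ x, f x ∂ν| ≤ C * tvDist μ ν := by
  obtain ⟨p, n, _, _, h, hd⟩ := exists_add_eq_add_tvDist_eq μ ν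
  have hint (m : Measure X) [IsFiniteMeasure m] : Integrable f m :=
    .of_bound hf.aestronglyMeasurable C (.of_forall hC)
  have hsplit : ∫ x, f x ∂μ - ∫ x, f x ∂ν = ∫ x, f x ∂p - ∫ x, f x ∂n := by
    have := congrArg (∫ x, f x ∂·) h
    simp only [integral_add_measure (hint _) (hint _)] at this
    linarith
  have hbound (m : Measure X) [IsFiniteMeasure m] : |∫ x, f x ∂m| ≤ C * m.real .univ :=
    norm_integral_le_of_norm_le_const (f := f) (.of_forall hC)
  rw [hsplit, hd, mul_add]
  exact (abs_sub _ _).trans (add_le_add (hbound p) (hbound n))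

instance iterBindIsProbabilityMeasure (μ : Measure X) [IsProbabilityMeasure μ]
    (κ : Kernel X X) [IsMarkovKernel κ] (t : ℕ) : IsProbabilityMeasure (iterBind μ κ t) := by
  induction t with
  | zero => exact inferInstanceAs (IsProbabilityMeasure μ)
  | succ t ih => exact inferInstanceAs (IsProbabilityMeasure (κ ∘ₘ iterBind μ κ t))

lemma tvDist_iterBind_le {κ₁ κ₂ : Kernel X X} [IsMarkovKernel κ₁] [IsMarkovKernel κ₂]
    (μ : Measure X) [IsProbabilityMeasure μ] {δ : ℝ}
    (hstep : ∀ (ν : Measure X) [IsProbabilityMeasure ν], tvDist (ν.bind κ₁) (ν.bind κ₂) ≤ δ)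
    (t : ℕ) : tvDist (iterBind μ κ₁ t) (iterBind μ κ₂ t) ≤ t * δ := by
  induction t with
  | zero => simp [iterBind, tvDist_self]
  | succ t ih =>
    calc tvDist (iterBind μ κ₁ (t + 1)) (iterBind μ κ₂ (t + 1))
        ≤ tvDist ((iterBind μ κ₁ t).bind κ₁) ((iterBind μ κ₁ t).bind κ₂) +
          tvDist ((iterBind μ κ₁ t).bind κ₂) ((iterBind μ κ₂ t).bind κ₂) :=
          tvDist_triangle _ _ _
      _ ≤ δ + t * δ := add_le_add (hstep _) ((tvDist_bind_le _ _ κ₂).trans ih)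
      _ = (t + 1 : ℕ) * δ := by push_cast; ring

end

lemma sum_range_id_cast (n : ℕ) : ∑ i ∈ Finset.range n, (i : ℝ) = n * (n - 1) / 2 := by
  induction n with
  | zero => simp
  | succ n ih =>
    rw [Finset.sum_range_succ, ih]
    push_cast
    ring

theorem abs_return_sub_return_le_general {X : Type*} [MeasurableSpace X]
    (κ₁ κ₂ : Kernel X X) [IsMarkovKernel κ₁] [IsMarkovKernel κ₂]
    (μ : Measure X) [IsProbabilityMeasure μ]
    (R : X → ℝ) (hR : Measurable R) (Rmax : ℝ) (hRmax : 0 ≤ Rmax)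
    (hbound : ∀ x, |R x| ≤ Rmax)
    (δ : ℝ)
    (hstep : ∀ (ν : Measure X) [IsProbabilityMeasure ν],
      tvDist (ν.bind κ₁) (ν.bind κ₂) ≤ δ)
    (H : ℕ) :
    |(∑ t ∈ Finset.range H, ∫ x, R x ∂(iterBind μ κ₁ t)) -
        (∑ t ∈ Finset.range H, ∫ x, R x ∂(iterBind μ κ₂ t))|
      ≤ Rmax * ((H * (H - 1) / 2 : ℝ)) * δ := by
  have hterm (t : ℕ) :
      |∫ x, R x ∂(iterBind μ κ₁ t) - ∫ x, R x ∂(iterBind μ κ₂ t)| ≤ Rmax * (t * δ) :=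
    (abs_integral_sub_integral_le_mul_tvDist _ _ hR hbound).trans
      (mul_le_mul_of_nonneg_left (tvDist_iterBind_le μ hstep t) hRmax)
  calc _ = |∑ t ∈ Finset.range H,
          (∫ x, R x ∂(iterBind μ κ₁ t) - ∫ x, R x ∂(iterBind μ κ₂ t))| := by
        rw [Finset.sum_sub_distrib]
    _ ≤ ∑ t ∈ Finset.range H, Rmax * (t * δ) :=
        (Finset.abs_sum_le_sum_abs _ _).trans (Finset.sum_le_sum fun t _ => hterm t)
    _ = Rmax * (H * (H - 1) / 2 : ℝ) * δ := by
        rw [← Finset.mul_sum, ← Finset.sum_mul, sum_range_id_cast, mul_assoc]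

/-- **Theorem 2 of the paper, total-variation form.** If the one-step
total variation discrepancy between two Markov kernels `κ₁`, `κ₂` is uniformly bounded
by `δ` over all initial probability measures, and `R` is a measurable reward bounded in
absolute value by `Rmax ≥ 0`, then the `H`-step expected cumulative rewards
`Jᵢ = ∑_{t=0}^{H−1} ∫ R d(μκᵢ^t)` satisfy `|J₁ − J₂| ≤ Rmax · (H(H−1)/2) · δ`. -/
theorem abs_return_sub_return_le {X : Type*} [MeasurableSpace X]
    (κ₁ κ₂ : Kernel X X) [IsMarkovKernel κ₁] [IsMarkovKernel κ₂]
    (μ : Measure X) [IsProbabilityMeasure μ]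
    (R : X → ℝ) (hR : Measurable R) (Rmax : ℝ) (hRmax : 0 ≤ Rmax)
    (hbound : ∀ x, |R x| ≤ Rmax)
    (δ : ℝ) (hδ : 0 ≤ δ)
    (hstep : ∀ (ν : Measure X) [IsProbabilityMeasure ν],
      tvDist (ν.bind κ₁) (ν.bind κ₂) ≤ δ)
    (H : ℕ) :
    |(∑ t ∈ Finset.range H, ∫ x, R x ∂(iterBind μ κ₁ t)) -
        (∑ t ∈ Finset.range H, ∫ x, R x ∂(iterBind μ κ₂ t))|
      ≤ Rmax * ((H * (H - 1) / 2 : ℝ)) * δ :=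
  abs_return_sub_return_le_general κ₁ κ₂ μ R hR Rmax hRmax hbound δ hstep H
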